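/- arXiv:2306.15079 — 10 statements merged into one kernel-verified Lean document; each statement's English description precedes it below -/
import Mathlib

section
/- If the proximity measure satisfies ξ < 1, then the full Newton step is strictly feasible: every component of v + Δv and of s + Δs is strictly positive. -/
private lemma key_prod (b x y τ K α : ℝ) (hb : 0 < b) (hK : 0 ≤ K) (hKτ : K < τ)
    (h1 : (τ - b)^2 ≤ K^2) (h2 : (x - y)^2 ≤ 4*K^2) (h3 : x + y = 2*(τ - b))
    (hα0 : 0 ≤ α) (hα1 : α ≤ 1) : 0 < (b + α*x)*(b + α*y) := by
  have hy : y = 2*(τ - b) - x := by linarith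
  have hP : (b + α*x)*(b + α*y) = (b + α*(τ - b))^2 - α^2*(x - y)^2/4 := by
    rw [hy]; ring
  have hX : 0 < (1-α)*b + α*(τ-K) := by
    rcases eq_or_lt_of_le hα0 with h | h
    · rw [← h]; simpa using hb
    · have h1' : 0 < α*(τ-K) := mul_pos h (by linarith)
      nlinarith [mul_nonneg (by linarith : (0:ℝ) ≤ 1-α) hb.le]
  have hX' : 0 < (1-α)*b + α*(τ+K) := by
    nlinarith [mul_nonneg hα0 hK]
  rw [hP]
  nlinarith [mul_pos hX hX', mul_le_mul_of_nonneg_left h2 (sq_nonneg α)]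

private lemma factor_pos (b x y τ K : ℝ) (hb : 0 < b) (hK : 0 ≤ K) (hKτ : K < τ)
    (h1 : (τ - b)^2 ≤ K^2) (h2 : (x - y)^2 ≤ 4*K^2) (h3 : x + y = 2*(τ - b)) :
    0 < b + x := by
  by_contra h
  push_neg at h
  have hx : x < 0 := by linarith
  have hxne : x ≠ 0 := ne_of_lt hx
  set α := b / (-x) with hα
  have hαpos : 0 < α := div_pos hb (by linarith)
  have hα1 : α ≤ 1 := by
    rw [hα, div_le_one (by linarith)]; linarith
  have hxx : x / -x = -1 := by
    rw [div_neg, div_self hxne]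
  have hzero : b + α * x = 0 := by
    rw [hα, div_mul_eq_mul_div, mul_div_assoc, hxx]; ring
  have hk := key_prod b x y τ K α hb hK hKτ h1 h2 h3 hαpos.le hα1
  rw [hzero, zero_mul] at hk
  exact lt_irrefl 0 hk

/-- Lemma 1 (strict feasibility of the full Newton step): if the proximity
measure `ξ = ‖τ e − √(v s)‖ / τ` satisfies `ξ < 1`, then the full Newton step
is strictly feasible, i.e. every component of `v + Δv` and `s + Δs` is
strictly positive. -/
theorem full_newton_step_strictly_feasible
    (n : ℕ) (hn : 0 < n)
    (v s dv ds : Fin (2 * n) → ℝ) (τ : ℝ) (hτ : 0 < τ)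
    (hv : ∀ i, 0 < v i) (hs : ∀ i, 0 < s i)
    (hdot : 0 ≤ ∑ i, dv i * ds i)
    (hnewton : ∀ i, Real.sqrt (s i / v i) * dv i + Real.sqrt (v i / s i) * ds i
        = 2 * (τ - Real.sqrt (v i * s i)))
    (ξ : ℝ)
    (hξdef : ξ = Real.sqrt (∑ i, (τ - Real.sqrt (v i * s i)) ^ 2) / τ)
    (hξ : ξ < 1) :
    (∀ i, 0 < v i + dv i) ∧ (∀ i, 0 < s i + ds i) := by
  set β : Fin (2*n) → ℝ := fun i => Real.sqrt (v i * s i) with hβ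
  have hβpos : ∀ i, 0 < β i := fun i => Real.sqrt_pos.2 (mul_pos (hv i) (hs i))
  set dv' : Fin (2*n) → ℝ := fun i => Real.sqrt (s i / v i) * dv i with hdv'
  set ds' : Fin (2*n) → ℝ := fun i => Real.sqrt (v i / s i) * ds i with hds'
  have h3 : ∀ i, dv' i + ds' i = 2*(τ - β i) := fun i => hnewton i
  have hone : ∀ i, Real.sqrt (s i / v i) * Real.sqrt (v i / s i) = 1 := by
    intro i
    have hvne := (hv i).ne'
    have hsne := (hs i).ne'
    rw [← Real.sqrt_mul (div_nonneg (hs i).le (hv i).le)]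
    rw [show s i / v i * (v i / s i) = 1 by field_simp]
    exact Real.sqrt_one
  have hprod : ∀ i, dv' i * ds' i = dv i * ds i := by
    intro i
    calc dv' i * ds' i
        = (Real.sqrt (s i / v i) * Real.sqrt (v i / s i)) * (dv i * ds i) := by
          simp only [hdv', hds']; ring
      _ = dv i * ds i := by rw [hone i]; ring
  set K := ξ * τ with hKdef
  have hξnn : 0 ≤ ξ := by
    rw [hξdef]; positivity
  have hKnn : 0 ≤ K := mul_nonneg hξnn hτ.le
  have hKτ : K < τ := by
    calc K = ξ * τ := rfl
      _ < 1 * τ := by exact mul_lt_mul_of_pos_right hξ hτ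
      _ = τ := one_mul τ
  have hsum : ∑ i, (τ - β i)^2 = K^2 := by
    have hKeq : K = Real.sqrt (∑ i, (τ - β i) ^ 2) := by
      rw [hKdef, hξdef]
      field_simp
      rfl
    rw [hKeq, Real.sq_sqrt (Finset.sum_nonneg fun i _ => sq_nonneg _)]
  have h1i : ∀ i, (τ - β i)^2 ≤ K^2 := by
    intro i
    rw [← hsum]
    exact Finset.single_le_sum (f := fun j => (τ - β j)^2)
      (fun j _ => sq_nonneg _) (Finset.mem_univ i)
  have hqsum : ∑ i, (dv' i - ds' i)^2 ≤ 4*K^2 := by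
    have e : ∑ i, (dv' i - ds' i)^2
        = ∑ i, (4*(τ - β i)^2 - 4*(dv i * ds i)) := by
      refine Finset.sum_congr rfl fun i _ => ?_
      calc (dv' i - ds' i)^2 = (dv' i + ds' i)^2 - 4*(dv' i * ds' i) := by ring
        _ = (2*(τ - β i))^2 - 4*(dv i * ds i) := by rw [h3 i, hprod i]
        _ = 4*(τ - β i)^2 - 4*(dv i * ds i) := by ring
    rw [e, Finset.sum_sub_distrib, ← Finset.mul_sum, ← Finset.mul_sum, hsum]
    linarith
  have h2i : ∀ i, (dv' i - ds' i)^2 ≤ 4*K^2 := by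
    intro i
    exact le_trans
      (Finset.single_le_sum (f := fun j => (dv' j - ds' j)^2)
        (fun j _ => sq_nonneg _) (Finset.mem_univ i)) hqsum
  -- √(v/s) * β = v  and  √(s/v) * β = s
  have hvs : ∀ i, Real.sqrt (v i / s i) * β i = v i := by
    intro i
    have hsne := (hs i).ne'
    rw [hβ, ← Real.sqrt_mul (div_nonneg (hv i).le (hs i).le)]
    rw [show v i / s i * (v i * s i) = (v i)^2 by field_simp]
    exact Real.sqrt_sq (hv i).le
  have hsv : ∀ i, Real.sqrt (s i / v i) * β i = s i := by
    intro i
    have hvne := (hv i).ne'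
    rw [hβ, ← Real.sqrt_mul (div_nonneg (hs i).le (hv i).le)]
    rw [show s i / v i * (v i * s i) = (s i)^2 by field_simp]
    exact Real.sqrt_sq (hs i).le
  constructor
  · intro i
    have hfac : 0 < β i + dv' i :=
      factor_pos (β i) (dv' i) (ds' i) τ K (hβpos i) hKnn hKτ (h1i i) (h2i i) (h3 i)
    have heq : v i + dv i = (v i / β i) * (β i + dv' i) := by
      have h1 : dv i = Real.sqrt (v i / s i) * dv' i := by
        rw [hdv']
        calc dv i = 1 * dv i := by ring
          _ = (Real.sqrt (s i / v i) * Real.sqrt (v i / s i)) * dv i := by rw [hone i]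
          _ = Real.sqrt (v i / s i) * (Real.sqrt (s i / v i) * dv i) := by ring
      have h2 : Real.sqrt (v i / s i) = v i / β i := by
        rw [eq_div_iff (hβpos i).ne', hvs i]
      rw [h1, h2, mul_add, div_mul_cancel₀ _ (hβpos i).ne']
    rw [heq]
    exact mul_pos (div_pos (hv i) (hβpos i)) hfac
  · intro i
    have h3' : ds' i + dv' i = 2*(τ - β i) := by rw [add_comm]; exact h3 i
    have h2' : (ds' i - dv' i)^2 ≤ 4*K^2 := by
      rw [show (ds' i - dv' i)^2 = (dv' i - ds' i)^2 by ring]; exact h2i i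
    have hfac : 0 < β i + ds' i :=
      factor_pos (β i) (ds' i) (dv' i) τ K (hβpos i) hKnn hKτ (h1i i) h2' h3'
    have heq : s i + ds i = (s i / β i) * (β i + ds' i) := by
      have h1 : ds i = Real.sqrt (s i / v i) * ds' i := by
        rw [hds']
        calc ds i = 1 * ds i := by ring
          _ = (Real.sqrt (s i / v i) * Real.sqrt (v i / s i)) * ds i := by rw [hone i]
          _ = Real.sqrt (s i / v i) * (Real.sqrt (v i / s i) * ds i) := by ring
      have h2 : Real.sqrt (s i / v i) = s i / β i := by
        rw [eq_div_iff (hβpos i).ne', hsv i]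
      rw [h1, h2, mul_add, div_mul_cancel₀ _ (hβpos i).ne']
    rw [heq]
    exact mul_pos (div_pos (hs i) (hβpos i)) hfac
end

section
/- If the proximity measure satisfies ξ < 1, then after the full Newton step v₊ = v + Δv, s₊ = s + Δs the duality gap satisfies v₊ᵀ s₊ ≤ 2n τ². -/
/-- Lemma 2 (duality-gap bound): if the proximity measure `ξ < 1`, then after
the full Newton step `v₊ = v + Δv`, `s₊ = s + Δs` the duality gap satisfies
`v₊ᵀ s₊ ≤ 2n τ²`. -/
theorem duality_gap_after_full_newton_step
    (n : ℕ) (hn : 0 < n)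
    (v s dv ds : Fin (2 * n) → ℝ) (τ : ℝ) (hτ : 0 < τ)
    (hv : ∀ i, 0 < v i) (hs : ∀ i, 0 < s i)
    (hdot : 0 ≤ ∑ i, dv i * ds i)
    (hnewton : ∀ i, Real.sqrt (s i / v i) * dv i + Real.sqrt (v i / s i) * ds i
        = 2 * (τ - Real.sqrt (v i * s i)))
    (ξ : ℝ)
    (hξdef : ξ = Real.sqrt (∑ i, (τ - Real.sqrt (v i * s i)) ^ 2) / τ)
    (hξ : ξ < 1) :
    ∑ i, (v i + dv i) * (s i + ds i) ≤ 2 * (n : ℝ) * τ ^ 2 := by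
  have key : ∀ i, (v i + dv i) * (s i + ds i) ≤ τ ^ 2 := by
    intro i
    have hvi := hv i
    have hsi := hs i
    set a := Real.sqrt (s i / v i) with ha
    set b := Real.sqrt (v i / s i) with hb
    set β := Real.sqrt (v i * s i) with hβ
    have hβa : β * a = s i := by
      rw [hβ, ha, ← Real.sqrt_mul (by positivity),
        show v i * s i * (s i / v i) = s i * s i by field_simp]
      exact Real.sqrt_mul_self hsi.le
    have hβb : β * b = v i := by
      rw [hβ, hb, ← Real.sqrt_mul (by positivity),
        show v i * s i * (v i / s i) = v i * v i by field_simp]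
      exact Real.sqrt_mul_self hvi.le
    have hβ2 : β * β = v i * s i := Real.mul_self_sqrt (by positivity)
    have hab : a * b = 1 := by
      rw [ha, hb, ← Real.sqrt_mul (by positivity),
        show s i / v i * (v i / s i) = 1 by field_simp]
      exact Real.sqrt_one
    have hx : (a * dv i) * (b * ds i) = dv i * ds i := by
      rw [show (a * dv i) * (b * ds i) = (a * b) * (dv i * ds i) by ring, hab, one_mul]
    have hN : a * dv i + b * ds i = 2 * (τ - β) := hnewton i
    have hN2 : (a * dv i + b * ds i) ^ 2 = 4 * (τ - β) ^ 2 := by rw [hN]; ring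
    have hxy : (a * dv i) * (b * ds i) ≤ (τ - β) ^ 2 := by
      nlinarith [sq_nonneg (a * dv i - b * ds i), hN2]
    have expand : (v i + dv i) * (s i + ds i)
        = β * β + β * (a * dv i + b * ds i) + (a * dv i) * (b * ds i) := by
      linear_combination -hβ2 - dv i * hβa - ds i * hβb - hx
    rw [expand, hN]
    nlinarith [hxy]
  calc ∑ i, (v i + dv i) * (s i + ds i) ≤ ∑ _i : Fin (2 * n), τ ^ 2 :=
        Finset.sum_le_sum fun i _ => key i
    _ = 2 * (n : ℝ) * τ ^ 2 := by
        simp [Finset.sum_const, Finset.card_univ]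
end

section
/- If ξ < 1 and v₊ = v + Δv, s₊ = s + Δs, then the componentwise product after the full Newton step satisfies the exact identity v₊ s₊ = τ² e − q²/4, where q² denotes the componentwise square of q. -/
/-- Exact identity for the componentwise product after a full Newton step:
if `ξ < 1` then `v₊ s₊ = τ² e − q²/4` componentwise, where
`q = √(s/v) Δv − √(v/s) Δs`. -/
theorem componentwise_product_after_full_newton_step
    (n : ℕ) (hn : 0 < n)
    (v s dv ds : Fin (2 * n) → ℝ) (τ : ℝ) (hτ : 0 < τ)
    (hv : ∀ i, 0 < v i) (hs : ∀ i, 0 < s i)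
    (hdot : 0 ≤ ∑ i, dv i * ds i)
    (hnewton : ∀ i, Real.sqrt (s i / v i) * dv i + Real.sqrt (v i / s i) * ds i
        = 2 * (τ - Real.sqrt (v i * s i)))
    (q : Fin (2 * n) → ℝ)
    (hq : ∀ i, q i = Real.sqrt (s i / v i) * dv i - Real.sqrt (v i / s i) * ds i)
    (ξ : ℝ)
    (hξdef : ξ = Real.sqrt (∑ i, (τ - Real.sqrt (v i * s i)) ^ 2) / τ)
    (hξ : ξ < 1) :
    ∀ i, (v i + dv i) * (s i + ds i) = τ ^ 2 - q i ^ 2 / 4 := by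
  intro i
  have hvi := hv i
  have hsi := hs i
  set β := Real.sqrt (v i * s i) with hβ
  have hβ2 : β ^ 2 = v i * s i := Real.sq_sqrt (by positivity)
  have h1 : Real.sqrt (s i / v i) * β = s i := by
    rw [hβ, ← Real.sqrt_mul (by positivity)]
    rw [show s i / v i * (v i * s i) = (s i) ^ 2 by field_simp]
    exact Real.sqrt_sq hsi.le
  have h2 : Real.sqrt (v i / s i) * β = v i := by
    rw [hβ, ← Real.sqrt_mul (by positivity)]
    rw [show v i / s i * (v i * s i) = (v i) ^ 2 by field_simp]
    exact Real.sqrt_sq hvi.le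
  have h3 : Real.sqrt (s i / v i) * Real.sqrt (v i / s i) = 1 := by
    rw [← Real.sqrt_mul (by positivity)]
    rw [show s i / v i * (v i / s i) = 1 by field_simp]
    exact Real.sqrt_one
  have N := hnewton i
  have Q := hq i
  have hsum : s i * dv i + v i * ds i = β * (2 * (τ - β)) := by
    linear_combination β * N - dv i * h1 - ds i * h2
  have hprod : dv i * ds i = ((2 * (τ - β)) ^ 2 - q i ^ 2) / 4 := by
    have : dv i * ds i
        = (Real.sqrt (s i / v i) * dv i) * (Real.sqrt (v i / s i) * ds i) / 1 := by
      rw [show (Real.sqrt (s i / v i) * dv i) * (Real.sqrt (v i / s i) * ds i)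
          = (Real.sqrt (s i / v i) * Real.sqrt (v i / s i)) * (dv i * ds i) by ring,
        h3]; ring
    rw [this, ← N, Q]; ring
  nlinarith [hβ2, hsum, hprod]
end

section
/- If ξ < 1 and v₊ = v + Δv, s₊ = s + Δs, then the duality gap after the full Newton step satisfies the exact identity v₊ᵀ s₊ = 2n τ² − ‖q‖²/4. -/
/-- Exact identity for the duality gap after a full Newton step:
if `ξ < 1` then `v₊ᵀ s₊ = 2n τ² − ‖q‖²/4`, where
`q = √(s/v) Δv − √(v/s) Δs`. -/
theorem duality_gap_exact_identity_after_full_newton_step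
    (n : ℕ) (hn : 0 < n)
    (v s dv ds : Fin (2 * n) → ℝ) (τ : ℝ) (hτ : 0 < τ)
    (hv : ∀ i, 0 < v i) (hs : ∀ i, 0 < s i)
    (hdot : 0 ≤ ∑ i, dv i * ds i)
    (hnewton : ∀ i, Real.sqrt (s i / v i) * dv i + Real.sqrt (v i / s i) * ds i
        = 2 * (τ - Real.sqrt (v i * s i)))
    (q : Fin (2 * n) → ℝ)
    (hq : ∀ i, q i = Real.sqrt (s i / v i) * dv i - Real.sqrt (v i / s i) * ds i)
    (ξ : ℝ)
    (hξdef : ξ = Real.sqrt (∑ i, (τ - Real.sqrt (v i * s i)) ^ 2) / τ)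
    (hξ : ξ < 1) :
    ∑ i, (v i + dv i) * (s i + ds i) = 2 * (n : ℝ) * τ ^ 2 - (∑ i, q i ^ 2) / 4 := by
  have key : ∀ i, (v i + dv i) * (s i + ds i) = τ ^ 2 - q i ^ 2 / 4 := by
    intro i
    have hvi := hv i
    have hsi := hs i
    set sv := Real.sqrt (v i) with hsvdef
    set ss := Real.sqrt (s i) with hssdef
    have hsv2 : sv ^ 2 = v i := Real.sq_sqrt hvi.le
    have hss2 : ss ^ 2 = s i := Real.sq_sqrt hsi.le
    have hsvpos : 0 < sv := Real.sqrt_pos.mpr hvi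
    have hsspos : 0 < ss := Real.sqrt_pos.mpr hsi
    have ha : Real.sqrt (s i / v i) = ss / sv := Real.sqrt_div hsi.le _
    have hb : Real.sqrt (v i / s i) = sv / ss := Real.sqrt_div hvi.le _
    have hβ : Real.sqrt (v i * s i) = sv * ss := Real.sqrt_mul hvi.le _
    have hN := hnewton i
    rw [ha, hb, hβ] at hN
    have hQ := hq i
    rw [ha, hb] at hQ
    have hN' : ss ^ 2 * dv i + sv ^ 2 * ds i = 2 * (τ - sv * ss) * (sv * ss) := by
      field_simp at hN
      nlinarith [hN]
    have hQ' : q i * (sv * ss) = ss ^ 2 * dv i - sv ^ 2 * ds i := by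
      rw [hQ]; field_simp
    have hdvds : dv i * ds i * (sv * ss) ^ 2
        = ((2 * (τ - sv * ss) * (sv * ss)) ^ 2 - (q i * (sv * ss)) ^ 2) / 4 := by
      have h0 : dv i * ds i * (sv * ss) ^ 2
          = ((ss ^ 2 * dv i + sv ^ 2 * ds i) ^ 2 - (ss ^ 2 * dv i - sv ^ 2 * ds i) ^ 2) / 4 := by
        ring
      rw [h0, hN', ← hQ']
    have main : (v i + dv i) * (s i + ds i) * (sv * ss) ^ 2
        = (τ ^ 2 - q i ^ 2 / 4) * (sv * ss) ^ 2 := by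
      rw [← hsv2, ← hss2]
      linear_combination (sv * ss) ^ 2 * hN' + hdvds
    have h2 : (0:ℝ) < (sv * ss) ^ 2 := by positivity
    exact mul_right_cancel₀ (ne_of_gt h2) main
  calc ∑ i, (v i + dv i) * (s i + ds i) = ∑ i, (τ ^ 2 - q i ^ 2 / 4) := by
        exact Finset.sum_congr rfl fun i _ => key i
    _ = 2 * (n : ℝ) * τ ^ 2 - (∑ i, q i ^ 2) / 4 := by
        rw [Finset.sum_sub_distrib, Finset.sum_const, Finset.card_univ]
        simp [Finset.sum_div]
end

section
/- If ξ < 1 and v₊ = v + Δv, s₊ = s + Δs with β₊ = √(v₊ s₊) (componentwise), then every component of β₊ is at least τ √(1 − ξ²), i.e. min_i (β₊)_i ≥ τ √(1 − ξ²). -/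
/-- Lower bound on the components of `β₊ = √(v₊ s₊)` after a full Newton step:
if `ξ < 1` then every component of `β₊` is at least `τ √(1 − ξ²)`. -/
theorem beta_plus_componentwise_lower_bound
    (n : ℕ) (hn : 0 < n)
    (v s dv ds : Fin (2 * n) → ℝ) (τ : ℝ) (hτ : 0 < τ)
    (hv : ∀ i, 0 < v i) (hs : ∀ i, 0 < s i)
    (hdot : 0 ≤ ∑ i, dv i * ds i)
    (hnewton : ∀ i, Real.sqrt (s i / v i) * dv i + Real.sqrt (v i / s i) * ds i
        = 2 * (τ - Real.sqrt (v i * s i)))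
    (ξ : ℝ)
    (hξdef : ξ = Real.sqrt (∑ i, (τ - Real.sqrt (v i * s i)) ^ 2) / τ)
    (hξ : ξ < 1) :
    ∀ i, τ * Real.sqrt (1 - ξ ^ 2) ≤ Real.sqrt ((v i + dv i) * (s i + ds i)) := by
  set a : Fin (2 * n) → ℝ := fun j => Real.sqrt (s j / v j) * dv j with ha
  set b : Fin (2 * n) → ℝ := fun j => Real.sqrt (v j / s j) * ds j with hb
  have hvne : ∀ j, v j ≠ 0 := fun j => (hv j).ne'
  have hsne : ∀ j, s j ≠ 0 := fun j => (hs j).ne'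
  have hab : ∀ j, a j * b j = dv j * ds j := by
    intro j
    have h1 : Real.sqrt (s j / v j) * Real.sqrt (v j / s j) = 1 := by
      rw [← Real.sqrt_mul (div_nonneg (hs j).le (hv j).le)]
      rw [show s j / v j * (v j / s j) = 1 by field_simp [hvne j, hsne j]]
      exact Real.sqrt_one
    simp only [ha, hb]
    calc Real.sqrt (s j / v j) * dv j * (Real.sqrt (v j / s j) * ds j)
        = (Real.sqrt (s j / v j) * Real.sqrt (v j / s j)) * (dv j * ds j) := by ring
      _ = dv j * ds j := by rw [h1, one_mul]
  have hβa : ∀ j, s j * dv j = Real.sqrt (v j * s j) * a j := by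
    intro j
    have : Real.sqrt (v j * s j) * Real.sqrt (s j / v j) = s j := by
      rw [← Real.sqrt_mul (mul_nonneg (hv j).le (hs j).le)]
      rw [show v j * s j * (s j / v j) = s j ^ 2 by field_simp [hvne j]]
      exact Real.sqrt_sq (hs j).le
    simp only [ha]
    rw [← mul_assoc, this]
  have hβb : ∀ j, v j * ds j = Real.sqrt (v j * s j) * b j := by
    intro j
    have : Real.sqrt (v j * s j) * Real.sqrt (v j / s j) = v j := by
      rw [← Real.sqrt_mul (mul_nonneg (hv j).le (hs j).le)]
      rw [show v j * s j * (v j / s j) = v j ^ 2 by field_simp [hsne j]]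
      exact Real.sqrt_sq (hv j).le
    simp only [hb]
    rw [← mul_assoc, this]
  have hβ2 : ∀ j, Real.sqrt (v j * s j) ^ 2 = v j * s j := fun j =>
    Real.sq_sqrt (mul_nonneg (hv j).le (hs j).le)
  -- key componentwise identity
  have hkey : ∀ j, (v j + dv j) * (s j + ds j) = τ ^ 2 - (a j - b j) ^ 2 / 4 := by
    intro j
    have hE5 : a j + b j = 2 * (τ - Real.sqrt (v j * s j)) := hnewton j
    have h1 : Real.sqrt (s j / v j) * Real.sqrt (v j / s j) = 1 := by
      rw [← Real.sqrt_mul (div_nonneg (hs j).le (hv j).le)]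
      rw [show s j / v j * (v j / s j) = 1 by field_simp [hvne j, hsne j]]
      exact Real.sqrt_one
    linear_combination hβa j + hβb j + hab j - hβ2 j - (2 * dv j * ds j) * h1 +
      (τ + (a j + b j - 2 * τ + 2 * Real.sqrt (v j * s j)) / 4) * hE5
  -- sum bound
  have hsumeq : ∀ j, (a j - b j) ^ 2 =
      4 * (τ - Real.sqrt (v j * s j)) ^ 2 - 4 * (dv j * ds j) := by
    intro j
    have hE5 : a j + b j = 2 * (τ - Real.sqrt (v j * s j)) := hnewton j
    linear_combination (-4 : ℝ) * hab j +
      (a j + b j + 2 * (τ - Real.sqrt (v j * s j))) * hE5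
  have hsum : ∑ j, (a j - b j) ^ 2 ≤ 4 * ∑ j, (τ - Real.sqrt (v j * s j)) ^ 2 := by
    calc ∑ j, (a j - b j) ^ 2
        = ∑ j, (4 * (τ - Real.sqrt (v j * s j)) ^ 2 - 4 * (dv j * ds j)) :=
          Finset.sum_congr rfl (fun j _ => hsumeq j)
      _ = 4 * ∑ j, (τ - Real.sqrt (v j * s j)) ^ 2 - 4 * ∑ j, dv j * ds j := by
          rw [Finset.sum_sub_distrib, ← Finset.mul_sum, ← Finset.mul_sum]
      _ ≤ 4 * ∑ j, (τ - Real.sqrt (v j * s j)) ^ 2 := by linarith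
  have hSnn : (0 : ℝ) ≤ ∑ j, (τ - Real.sqrt (v j * s j)) ^ 2 :=
    Finset.sum_nonneg (fun j _ => sq_nonneg _)
  have hξsq : τ ^ 2 * ξ ^ 2 = ∑ j, (τ - Real.sqrt (v j * s j)) ^ 2 := by
    rw [hξdef, div_pow, Real.sq_sqrt hSnn]
    field_simp
  have hξnn : 0 ≤ ξ := by
    rw [hξdef]; exact div_nonneg (Real.sqrt_nonneg _) hτ.le
  intro i
  have hsingle : (a i - b i) ^ 2 ≤ ∑ j, (a j - b j) ^ 2 :=
    Finset.single_le_sum (f := fun j => (a j - b j) ^ 2) (fun j _ => sq_nonneg _) (Finset.mem_univ i)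
  have hprod : τ ^ 2 * (1 - ξ ^ 2) ≤ (v i + dv i) * (s i + ds i) := by
    rw [hkey i]; nlinarith [hsingle, hsum, hξsq]
  have h1ξ : 0 ≤ 1 - ξ ^ 2 := by nlinarith
  calc τ * Real.sqrt (1 - ξ ^ 2)
      = Real.sqrt (τ ^ 2 * (1 - ξ ^ 2)) := by
        rw [Real.sqrt_mul (sq_nonneg τ), Real.sqrt_sq hτ.le]
    _ ≤ Real.sqrt ((v i + dv i) * (s i + ds i)) := Real.sqrt_le_sqrt hprod
end

section
/- If ξ < 1 and v₊ = v + Δv, s₊ = s + Δs with β₊ = √(v₊ s₊) (componentwise), then ‖τ e − β₊‖ / τ ≤ ξ² / (1 + √(1 − ξ²)). -/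
/-- Bound on the unscaled proximity after a full Newton step:
if `ξ < 1` and `β₊ = √(v₊ s₊)` componentwise, then
`‖τ e − β₊‖ / τ ≤ ξ² / (1 + √(1 − ξ²))`. -/
theorem proximity_after_full_newton_step
    (n : ℕ) (hn : 0 < n)
    (v s dv ds : Fin (2 * n) → ℝ) (τ : ℝ) (hτ : 0 < τ)
    (hv : ∀ i, 0 < v i) (hs : ∀ i, 0 < s i)
    (hdot : 0 ≤ ∑ i, dv i * ds i)
    (hnewton : ∀ i, Real.sqrt (s i / v i) * dv i + Real.sqrt (v i / s i) * ds i
        = 2 * (τ - Real.sqrt (v i * s i)))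
    (ξ : ℝ)
    (hξdef : ξ = Real.sqrt (∑ i, (τ - Real.sqrt (v i * s i)) ^ 2) / τ)
    (hξ : ξ < 1) :
    Real.sqrt (∑ i, (τ - Real.sqrt ((v i + dv i) * (s i + ds i))) ^ 2) / τ
      ≤ ξ ^ 2 / (1 + Real.sqrt (1 - ξ ^ 2)) := by
  set β : Fin (2 * n) → ℝ := fun i => Real.sqrt (v i * s i) with hβdef
  set q : Fin (2 * n) → ℝ := fun i =>
    Real.sqrt (s i / v i) * dv i - Real.sqrt (v i / s i) * ds i with hqdef
  clear_value β q
  have hβi : ∀ i, β i = Real.sqrt (v i * s i) := fun i => by rw [hβdef]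
  -- basic componentwise identities
  have hab : ∀ i, Real.sqrt (s i / v i) * Real.sqrt (v i / s i) = 1 := by
    intro i
    have hv0 : v i ≠ 0 := (hv i).ne'
    have hs0 : s i ≠ 0 := (hs i).ne'
    rw [← Real.sqrt_mul (div_nonneg (hs i).le (hv i).le)]
    have h : s i / v i * (v i / s i) = 1 := by field_simp
    rw [h, Real.sqrt_one]
  have hβa : ∀ i, β i * Real.sqrt (s i / v i) = s i := by
    intro i
    have hv0 : v i ≠ 0 := (hv i).ne'
    rw [hβdef, ← Real.sqrt_mul (mul_nonneg (hv i).le (hs i).le)]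
    have h : v i * s i * (s i / v i) = s i ^ 2 := by field_simp
    rw [h, Real.sqrt_sq (hs i).le]
  have hβb : ∀ i, β i * Real.sqrt (v i / s i) = v i := by
    intro i
    have hs0 : s i ≠ 0 := (hs i).ne'
    rw [hβdef, ← Real.sqrt_mul (mul_nonneg (hv i).le (hs i).le)]
    have h : v i * s i * (v i / s i) = v i ^ 2 := by field_simp
    rw [h, Real.sqrt_sq (hv i).le]
  have hββ : ∀ i, β i * β i = v i * s i := fun i => by
    rw [hβdef]
    exact Real.mul_self_sqrt (mul_nonneg (hv i).le (hs i).le)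
  have h5sq : ∀ i,
      (Real.sqrt (s i / v i) * dv i + Real.sqrt (v i / s i) * ds i) ^ 2
        = (2 * (τ - β i)) ^ 2 := fun i => by rw [hnewton i, hβi i]
  -- key algebraic identity: (v+dv)(s+ds) = τ² - q²/4
  have hplus : ∀ i, (v i + dv i) * (s i + ds i) = τ ^ 2 - q i ^ 2 / 4 := by
    intro i
    have h5 : Real.sqrt (s i / v i) * dv i + Real.sqrt (v i / s i) * ds i
        = 2 * (τ - β i) := by rw [hβi i]; exact hnewton i
    have h1 := hab i
    have h2 := hβa i
    have h3 := hβb i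
    have h4 := hββ i
    have h6 := h5sq i
    simp only [hqdef]
    linear_combination (β i) * h5 - h4 - ds i * h3 - dv i * h2
      - (dv i * ds i) * h1 + h6 / 4
  -- ξ facts
  have hσ0 : (0:ℝ) ≤ ∑ i, (τ - β i) ^ 2 := Finset.sum_nonneg fun i _ => sq_nonneg _
  have hξ0 : 0 ≤ ξ := by
    rw [hξdef]; exact div_nonneg (Real.sqrt_nonneg _) hτ.le
  have hσ : ∑ i, (τ - β i) ^ 2 = ξ ^ 2 * τ ^ 2 := by
    have hs' : Real.sqrt (∑ i, (τ - β i) ^ 2) = ξ * τ := by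
      simp only [hβi]; rw [hξdef]; field_simp
    rw [← Real.sq_sqrt hσ0, hs']; ring
  -- ∑ q² ≤ 4 τ² ξ²
  have hqsum : ∑ i, q i ^ 2 ≤ 4 * τ ^ 2 * ξ ^ 2 := by
    have hterm : ∀ i, q i ^ 2 = 4 * (τ - β i) ^ 2 - 4 * (dv i * ds i) := by
      intro i
      have h1 := hab i
      have h6 := h5sq i
      simp only [hqdef]
      linear_combination h6 - 4 * (dv i * ds i) * h1
    calc ∑ i, q i ^ 2 = 4 * (∑ i, (τ - β i) ^ 2) - 4 * (∑ i, dv i * ds i) := by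
          rw [Finset.mul_sum, Finset.mul_sum, ← Finset.sum_sub_distrib]
          exact Finset.sum_congr rfl fun i _ => hterm i
      _ ≤ 4 * (∑ i, (τ - β i) ^ 2) := by linarith
      _ = 4 * τ ^ 2 * ξ ^ 2 := by rw [hσ]; ring
  have hq_i : ∀ i, q i ^ 2 ≤ 4 * τ ^ 2 * ξ ^ 2 := by
    intro i
    refine le_trans ?_ hqsum
    simpa using Finset.single_le_sum (f := fun j => q j ^ 2)
      (fun j _ => sq_nonneg _) (Finset.mem_univ i)
  have hξsq : ξ ^ 2 < 1 := by nlinarith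
  set r : ℝ := Real.sqrt (1 - ξ ^ 2) with hrdef
  have hr0 : 0 ≤ r := Real.sqrt_nonneg _
  have hr1 : 0 < 1 + r := by linarith
  have hrsq : r ^ 2 = 1 - ξ ^ 2 := by
    rw [hrdef]; exact Real.sq_sqrt (by linarith)
  clear_value r
  have hτ2ξ : 0 ≤ τ ^ 2 * (1 - ξ ^ 2) :=
    mul_nonneg (sq_nonneg τ) (by linarith)
  -- componentwise bounds on β₊
  have hplus_nn : ∀ i, (0:ℝ) ≤ τ ^ 2 - q i ^ 2 / 4 := by
    intro i
    linarith [hq_i i, hτ2ξ, sq_nonneg τ, sq_nonneg ξ, mul_pos hτ hτ]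
  have hβp_le : ∀ i, Real.sqrt ((v i + dv i) * (s i + ds i)) ≤ τ := by
    intro i
    rw [hplus i]
    calc Real.sqrt (τ ^ 2 - q i ^ 2 / 4) ≤ Real.sqrt (τ ^ 2) :=
          Real.sqrt_le_sqrt (by linarith [sq_nonneg (q i)])
      _ = τ := Real.sqrt_sq hτ.le
  have hβp_ge : ∀ i, τ * r ≤ Real.sqrt ((v i + dv i) * (s i + ds i)) := by
    intro i
    rw [hplus i]
    have e1 : (τ * r) ^ 2 = τ ^ 2 - τ ^ 2 * ξ ^ 2 := by
      rw [mul_pow, hrsq]; ring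
    have h1 : (τ * r) ^ 2 ≤ τ ^ 2 - q i ^ 2 / 4 := by
      linarith [hq_i i, e1]
    calc τ * r = Real.sqrt ((τ * r) ^ 2) :=
          (Real.sqrt_sq (mul_nonneg hτ.le hr0)).symm
      _ ≤ Real.sqrt (τ ^ 2 - q i ^ 2 / 4) := Real.sqrt_le_sqrt h1
  -- key componentwise bound on τ - β₊
  have hkey : ∀ i, τ - Real.sqrt ((v i + dv i) * (s i + ds i))
      ≤ q i ^ 2 / (4 * τ * (1 + r)) := by
    intro i
    set b := Real.sqrt ((v i + dv i) * (s i + ds i)) with hbdef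
    have hbsq : b ^ 2 = τ ^ 2 - q i ^ 2 / 4 := by
      rw [hbdef, Real.sq_sqrt (by rw [hplus i]; exact hplus_nn i), hplus i]
    clear_value b
    have h1 : 0 ≤ τ - b := by
      have := hβp_le i
      rw [← hbdef] at this
      linarith
    have h2 : τ * r ≤ b := by
      have := hβp_ge i
      rwa [← hbdef] at this
    have h3 : (τ - b) * (τ + b) = q i ^ 2 / 4 := by
      have : b ^ 2 = τ ^ 2 - q i ^ 2 / 4 := hbsq
      nlinarith [this]
    have hden : 0 < 4 * τ * (1 + r) := by positivity
    rw [le_div_iff₀ hden]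
    have m1 : (τ - b) * (τ * r) ≤ (τ - b) * b := mul_le_mul_of_nonneg_left h2 h1
    nlinarith [m1, h3]
  have hkey0 : ∀ i, 0 ≤ τ - Real.sqrt ((v i + dv i) * (s i + ds i)) := by
    intro i; linarith [hβp_le i]
  -- sum bound
  have hsum : ∑ i, (τ - Real.sqrt ((v i + dv i) * (s i + ds i))) ^ 2
      ≤ (ξ ^ 2 * τ / (1 + r)) ^ 2 := by
    have step1 : ∑ i, (τ - Real.sqrt ((v i + dv i) * (s i + ds i))) ^ 2
        ≤ ∑ i, (q i ^ 2 / (4 * τ * (1 + r))) ^ 2 := by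
      apply Finset.sum_le_sum
      intro i _
      exact pow_le_pow_left₀ (hkey0 i) (hkey i) 2
    have step2 : ∑ i, (q i ^ 2 / (4 * τ * (1 + r))) ^ 2
        = (∑ i, (q i ^ 2) ^ 2) / (4 * τ * (1 + r)) ^ 2 := by
      rw [Finset.sum_div]
      exact Finset.sum_congr rfl fun i _ => by rw [div_pow]
    have step3 : ∑ i, (q i ^ 2) ^ 2 ≤ (∑ i, q i ^ 2) ^ 2 :=
      Finset.sum_sq_le_sq_sum_of_nonneg fun i _ => sq_nonneg _
    have step4 : (∑ i, q i ^ 2) ^ 2 ≤ (4 * τ ^ 2 * ξ ^ 2) ^ 2 := by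
      have h0 : (0:ℝ) ≤ ∑ i, q i ^ 2 := Finset.sum_nonneg fun i _ => sq_nonneg _
      exact pow_le_pow_left₀ h0 hqsum 2
    have hden2 : (0:ℝ) < (4 * τ * (1 + r)) ^ 2 := by positivity
    have hEq : (4 * τ ^ 2 * ξ ^ 2) ^ 2 / (4 * τ * (1 + r)) ^ 2
        = (ξ ^ 2 * τ / (1 + r)) ^ 2 := by
      field_simp
    calc ∑ i, (τ - Real.sqrt ((v i + dv i) * (s i + ds i))) ^ 2
        ≤ (∑ i, (q i ^ 2) ^ 2) / (4 * τ * (1 + r)) ^ 2 := by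
          rw [← step2]; exact step1
      _ ≤ (4 * τ ^ 2 * ξ ^ 2) ^ 2 / (4 * τ * (1 + r)) ^ 2 :=
          (div_le_div_iff_of_pos_right hden2).mpr (step3.trans step4)
      _ = (ξ ^ 2 * τ / (1 + r)) ^ 2 := hEq
  -- conclude
  have hfinal : Real.sqrt (∑ i, (τ - Real.sqrt ((v i + dv i) * (s i + ds i))) ^ 2)
      ≤ ξ ^ 2 * τ / (1 + r) := by
    calc Real.sqrt (∑ i, (τ - Real.sqrt ((v i + dv i) * (s i + ds i))) ^ 2)
        ≤ Real.sqrt ((ξ ^ 2 * τ / (1 + r)) ^ 2) := Real.sqrt_le_sqrt hsum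
      _ = ξ ^ 2 * τ / (1 + r) :=
          Real.sqrt_sq (div_nonneg (mul_nonneg (sq_nonneg ξ) hτ.le) hr1.le)
  rw [div_le_div_iff₀ hτ hr1]
  calc Real.sqrt (∑ i, (τ - Real.sqrt ((v i + dv i) * (s i + ds i))) ^ 2) * (1 + r)
      ≤ (ξ ^ 2 * τ / (1 + r)) * (1 + r) :=
        mul_le_mul_of_nonneg_right hfinal hr1.le
    _ = ξ ^ 2 * τ := by field_simp
end

section
/- Suppose ξ < 1, let 0 < η < 1, set τ₊ = (1 − η) τ, v₊ = v + Δv, s₊ = s + Δs, β₊ = √(v₊ s₊) (componentwise), and define the updated proximity measure ξ₊ = ‖τ₊ e − β₊‖ / τ₊. Then ξ₊ ≤ η √(2n) / (1 − η) + (1 / (1 − η)) · ξ² / (1 + √(1 − ξ²)). -/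
set_option maxHeartbeats 1000000

theorem sqrt_add_le' (x y : ℝ) (hx : 0 ≤ x) (hy : 0 ≤ y) :
    Real.sqrt (x + y) ≤ Real.sqrt x + Real.sqrt y := by
  calc Real.sqrt (x+y) ≤ Real.sqrt ((Real.sqrt x + Real.sqrt y)^2) := by
        apply Real.sqrt_le_sqrt
        nlinarith [Real.sq_sqrt hx, Real.sq_sqrt hy, Real.sqrt_nonneg x, Real.sqrt_nonneg y]
    _ = _ := Real.sqrt_sq (by positivity)

theorem key_point (v s dv ds τ : ℝ) (hv : 0 < v) (hs : 0 < s)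
    (h : Real.sqrt (s/v) * dv + Real.sqrt (v/s) * ds = 2*(τ - Real.sqrt (v*s))) :
    (v+dv)*(s+ds) = τ^2 - (Real.sqrt (s/v)*dv - Real.sqrt (v/s)*ds)^2/4 ∧
    (Real.sqrt (s/v)*dv) * (Real.sqrt (v/s)*ds) = dv*ds := by
  have ha : Real.sqrt v > 0 := Real.sqrt_pos.mpr hv
  have hb : Real.sqrt s > 0 := Real.sqrt_pos.mpr hs
  have h1 : Real.sqrt (s/v) = Real.sqrt s / Real.sqrt v := Real.sqrt_div hs.le v
  have h2 : Real.sqrt (v/s) = Real.sqrt v / Real.sqrt s := Real.sqrt_div hv.le s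
  have h3 : Real.sqrt (v*s) = Real.sqrt v * Real.sqrt s := Real.sqrt_mul hv.le s
  have hv2 : Real.sqrt v ^ 2 = v := Real.sq_sqrt hv.le
  have hs2 : Real.sqrt s ^ 2 = s := Real.sq_sqrt hs.le
  set a := Real.sqrt v
  set b := Real.sqrt s
  rw [h1, h2, h3] at h; rw [h1, h2]
  rw [← hv2, ← hs2]
  constructor
  · field_simp at h ⊢
    linear_combination (b*dv*b + a*ds*a + 2*(a*b)^2 + 2*τ*a*b) * h
  · field_simp

/-- Lemma 3 (first part): if `ξ < 1`, `0 < η < 1` and `τ₊ = (1 − η) τ`, then the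
updated proximity measure `ξ₊ = ‖τ₊ e − β₊‖ / τ₊` (with `β₊ = √(v₊ s₊)`
componentwise after the full Newton step) satisfies
`ξ₊ ≤ η √(2n)/(1 − η) + (1/(1 − η)) ξ²/(1 + √(1 − ξ²))`. -/
theorem proximity_after_full_newton_step_and_tau_update
    (n : ℕ) (hn : 0 < n)
    (v s dv ds : Fin (2 * n) → ℝ) (τ : ℝ) (hτ : 0 < τ)
    (hv : ∀ i, 0 < v i) (hs : ∀ i, 0 < s i)
    (hdot : 0 ≤ ∑ i, dv i * ds i)
    (hnewton : ∀ i, Real.sqrt (s i / v i) * dv i + Real.sqrt (v i / s i) * ds i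
        = 2 * (τ - Real.sqrt (v i * s i)))
    (ξ : ℝ)
    (hξdef : ξ = Real.sqrt (∑ i, (τ - Real.sqrt (v i * s i)) ^ 2) / τ)
    (hξ : ξ < 1)
    (η : ℝ) (hη0 : 0 < η) (hη1 : η < 1)
    (τp : ℝ) (hτp : τp = (1 - η) * τ)
    (ξp : ℝ)
    (hξpdef : ξp
      = Real.sqrt (∑ i, (τp - Real.sqrt ((v i + dv i) * (s i + ds i))) ^ 2) / τp) :
    ξp ≤ η * Real.sqrt (2 * (n : ℝ)) / (1 - η)
        + (1 / (1 - η)) * (ξ ^ 2 / (1 + Real.sqrt (1 - ξ ^ 2))) := by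
  set K : ℝ := ∑ i, (τ - Real.sqrt (v i * s i)) ^ 2 with hKdef
  have hK0 : 0 ≤ K := Finset.sum_nonneg fun i _ => sq_nonneg _
  have hξ0 : 0 ≤ ξ := hξdef ▸ div_nonneg (Real.sqrt_nonneg _) hτ.le
  have hKξ : K = ξ^2 * τ^2 := by
    rw [hξdef, div_pow, Real.sq_sqrt hK0]; field_simp
  have hξ2lt : ξ^2 < 1 := by nlinarith
  -- the quantities U i = (a i - b i)^2/4
  set U : Fin (2*n) → ℝ :=
    fun i => (Real.sqrt (s i / v i) * dv i - Real.sqrt (v i / s i) * ds i)^2/4 with hUdef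
  have hU0 : ∀ i, 0 ≤ U i := fun i => by positivity
  have key := fun i => key_point (v i) (s i) (dv i) (ds i) τ (hv i) (hs i) (hnewton i)
  have hprod : ∀ i, (v i + dv i) * (s i + ds i) = τ^2 - U i := fun i => (key i).1
  have hUeq : ∀ i, U i = (τ - Real.sqrt (v i * s i))^2 - dv i * ds i := by
    intro i
    have h1 := hnewton i
    have h2 := (key i).2
    simp only [hUdef]
    linear_combination ((Real.sqrt (s i / v i) * dv i + Real.sqrt (v i / s i) * ds i)/4
      + (τ - Real.sqrt (v i * s i))/2) * h1 - h2
  have hsumU : ∑ i, U i ≤ K := by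
    calc ∑ i, U i = K - ∑ i, dv i * ds i := by
          rw [hKdef, ← Finset.sum_sub_distrib]
          exact Finset.sum_congr rfl fun i _ => hUeq i
      _ ≤ K := by linarith
  have hUK : ∀ i, U i ≤ ξ^2 * τ^2 := by
    intro i
    calc U i ≤ ∑ j, U j := Finset.single_le_sum (fun j _ => hU0 j) (Finset.mem_univ i)
      _ ≤ K := hsumU
      _ = ξ^2 * τ^2 := hKξ
  set g : ℝ := Real.sqrt (1 - ξ^2) with hgdef
  have hg0 : 0 ≤ g := Real.sqrt_nonneg _
  have hgsq : g^2 = 1 - ξ^2 := Real.sq_sqrt (by linarith)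
  have hgpos : 0 < 1 + g := by linarith
  set B : Fin (2*n) → ℝ := fun i => Real.sqrt ((v i + dv i) * (s i + ds i)) with hBdef
  have hplow : ∀ i, τ^2 * g^2 ≤ (v i + dv i) * (s i + ds i) := by
    intro i; rw [hprod i, hgsq]; have := hUK i; nlinarith
  have hBsq : ∀ i, B i ^ 2 = τ^2 - U i := by
    intro i
    have hB : B i = Real.sqrt ((v i + dv i) * (s i + ds i)) := rfl
    rw [hB, Real.sq_sqrt (by nlinarith [hplow i, sq_nonneg (τ*g)])]
    exact hprod i
  have hBlow : ∀ i, τ * g ≤ B i := by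
    intro i
    calc τ * g = Real.sqrt ((τ*g)^2) := (Real.sqrt_sq (by positivity)).symm
      _ ≤ B i := Real.sqrt_le_sqrt (by nlinarith [hplow i])
  have hBup : ∀ i, B i ≤ τ := by
    intro i
    calc B i = Real.sqrt (τ^2 - U i) := by
          have hB : B i = Real.sqrt ((v i + dv i) * (s i + ds i)) := rfl
          rw [hB, hprod i]
      _ ≤ Real.sqrt (τ^2) := Real.sqrt_le_sqrt (by nlinarith [hU0 i])
      _ = τ := Real.sqrt_sq hτ.le
  have hDpos : 0 < τ * (1 + g) := by positivity
  have ht : ∀ i, τ - B i ≤ U i / (τ * (1 + g)) := by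
    intro i
    rw [le_div_iff₀ hDpos]
    have h1 := hBsq i
    have h2 := hBlow i
    have h3 := hBup i
    nlinarith
  have hS : ∑ i, (τ - B i)^2 ≤ (ξ^2 * τ^2)^2 / (τ * (1 + g))^2 := by
    have step1 : ∑ i, (τ - B i)^2 ≤ ∑ i, (U i / (τ * (1 + g)))^2 := by
      apply Finset.sum_le_sum
      intro i _
      have h0 : 0 ≤ τ - B i := by linarith [hBup i]
      have h1 : 0 ≤ U i / (τ * (1+g)) := div_nonneg (hU0 i) hDpos.le
      nlinarith [ht i]
    have step2 : ∑ i, (U i / (τ * (1 + g)))^2 = (∑ i, (U i)^2) / (τ * (1 + g))^2 := by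
      rw [Finset.sum_div]
      exact Finset.sum_congr rfl fun i _ => by rw [div_pow]
    have step3 : ∑ i, (U i)^2 ≤ (ξ^2 * τ^2)^2 := by
      calc ∑ i, (U i)^2 ≤ (∑ i, U i)^2 :=
            Finset.sum_sq_le_sq_sum_of_nonneg fun i _ => hU0 i
        _ ≤ (ξ^2 * τ^2)^2 := by
            have h1 : 0 ≤ ∑ i, U i := Finset.sum_nonneg fun i _ => hU0 i
            have h2 : ∑ i, U i ≤ ξ^2*τ^2 := hKξ ▸ hsumU
            nlinarith
    calc ∑ i, (τ - B i)^2 ≤ (∑ i, (U i)^2) / (τ * (1 + g))^2 := step1.trans step2.le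
      _ ≤ (ξ^2 * τ^2)^2 / (τ * (1 + g))^2 := by
          apply div_le_div_of_nonneg_right step3 (by positivity) |>.trans_eq rfl
  have hsum_final : ∑ i, (τp - B i)^2 ≤ (2*(n:ℝ)) * (η*τ)^2 + ∑ i, (τ - B i)^2 := by
    have : ∀ i ∈ Finset.univ, (τp - B i)^2 ≤ (η*τ)^2 + (τ - B i)^2 := by
      intro i _
      have h0 : 0 ≤ τ - B i := by linarith [hBup i]
      have : τp - B i = (τ - B i) - η*τ := by rw [hτp]; ring
      rw [this]
      nlinarith [mul_nonneg h0 (mul_nonneg hη0.le hτ.le)]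
    calc ∑ i, (τp - B i)^2 ≤ ∑ i, ((η*τ)^2 + (τ - B i)^2) := Finset.sum_le_sum this
      _ = (2*(n:ℝ)) * (η*τ)^2 + ∑ i, (τ - B i)^2 := by
          rw [Finset.sum_add_distrib, Finset.sum_const, Finset.card_univ, Fintype.card_fin]
          push_cast; ring
  have hτppos : 0 < τp := by rw [hτp]; nlinarith
  -- bound the sqrt of the final sum
  have hmain : Real.sqrt (∑ i, (τp - B i)^2)
      ≤ η*τ*Real.sqrt (2*(n:ℝ)) + ξ^2*τ^2 / (τ * (1 + g)) := by
    have h1 : Real.sqrt (∑ i, (τp - B i)^2)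
        ≤ Real.sqrt ((2*(n:ℝ)) * (η*τ)^2 + ∑ i, (τ - B i)^2) :=
      Real.sqrt_le_sqrt hsum_final
    have h2 : Real.sqrt ((2*(n:ℝ)) * (η*τ)^2 + ∑ i, (τ - B i)^2)
        ≤ Real.sqrt ((2*(n:ℝ)) * (η*τ)^2) + Real.sqrt (∑ i, (τ - B i)^2) :=
      sqrt_add_le' _ _ (by positivity) (Finset.sum_nonneg fun i _ => sq_nonneg _)
    have h3 : Real.sqrt ((2*(n:ℝ)) * (η*τ)^2) = η*τ*Real.sqrt (2*(n:ℝ)) := by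
      rw [mul_comm (2*(n:ℝ)), Real.sqrt_mul (by positivity), Real.sqrt_sq (by positivity)]
    have h4 : Real.sqrt (∑ i, (τ - B i)^2) ≤ ξ^2*τ^2 / (τ * (1 + g)) := by
      calc Real.sqrt (∑ i, (τ - B i)^2) ≤ Real.sqrt ((ξ^2 * τ^2)^2 / (τ * (1 + g))^2) :=
            Real.sqrt_le_sqrt hS
        _ = ξ^2*τ^2 / (τ * (1 + g)) := by
            rw [← div_pow, Real.sqrt_sq (by positivity)]
    linarith [h1, h2, h3.le, h3.ge]
  rw [hξpdef, div_le_iff₀ hτppos]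
  calc Real.sqrt (∑ i, (τp - B i)^2) ≤ η*τ*Real.sqrt (2*(n:ℝ)) + ξ^2*τ^2 / (τ * (1 + g)) :=
        hmain
    _ = (η * Real.sqrt (2 * (n:ℝ)) / (1 - η)
        + (1 / (1 - η)) * (ξ ^ 2 / (1 + g))) * τp := by
        have hne1 : (1:ℝ) - η ≠ 0 := by linarith
        have hne2 : (1:ℝ) + g ≠ 0 := ne_of_gt hgpos
        have hne3 : τ ≠ 0 := ne_of_gt hτ
        rw [hτp]
        field_simp
end

section
/- Suppose ξ ≤ 1/√2, let η = 1/(4√(2n)), set τ₊ = (1 − η) τ, v₊ = v + Δv, s₊ = s + Δs, β₊ = √(v₊ s₊) (componentwise), and define ξ₊ = ‖τ₊ e − β₊‖ / τ₊. Then ξ₊ ≤ 1/√2; in other words, the bound ξ ≤ 1/√2 on the proximity measure is preserved by one full Newton step followed by the update τ ← (1 − η) τ. -/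
private lemma key_alg (A D B dvi dsi vi si τ : ℝ)
    (hAD : A * D = 1) (hbA : B * A = si) (hbD : B * D = vi)
    (hxy : A * dvi + D * dsi = 2 * (τ - B)) :
    (vi + dvi) * (si + dsi) = τ^2 - (A * dvi - D * dsi)^2 / 4 ∧
    (A * dvi - D * dsi)^2 = 4 * (τ - B)^2 - 4 * (dvi * dsi) := by
  constructor
  · rw [← hbA, ← hbD]
    linear_combination (B^2 - dvi*dsi) * hAD
      + ((A*dvi + D*dsi)/4 + (B+τ)/2) * hxy
  · linear_combination (-4*dvi*dsi) * hAD
      + (A*dvi + D*dsi + 2*(τ-B)) * hxy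

set_option maxHeartbeats 1000000 in
/-- Lemma 3 (second part): if `ξ ≤ 1/√2` and `η = 1/(4√(2n))`, then after the
full Newton step and the update `τ ← (1 − η) τ` the new proximity measure
satisfies `ξ₊ ≤ 1/√2`, i.e. the bound on the proximity measure is preserved. -/
theorem proximity_bound_preserved
    (n : ℕ) (hn : 0 < n)
    (v s dv ds : Fin (2 * n) → ℝ) (τ : ℝ) (hτ : 0 < τ)
    (hv : ∀ i, 0 < v i) (hs : ∀ i, 0 < s i)
    (hdot : 0 ≤ ∑ i, dv i * ds i)
    (hnewton : ∀ i, Real.sqrt (s i / v i) * dv i + Real.sqrt (v i / s i) * ds i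
        = 2 * (τ - Real.sqrt (v i * s i)))
    (ξ : ℝ)
    (hξdef : ξ = Real.sqrt (∑ i, (τ - Real.sqrt (v i * s i)) ^ 2) / τ)
    (hξ : ξ ≤ 1 / Real.sqrt 2)
    (η : ℝ) (hηdef : η = 1 / (4 * Real.sqrt (2 * (n : ℝ))))
    (τp : ℝ) (hτp : τp = (1 - η) * τ)
    (ξp : ℝ)
    (hξpdef : ξp
      = Real.sqrt (∑ i, (τp - Real.sqrt ((v i + dv i) * (s i + ds i))) ^ 2) / τp) :
    ξp ≤ 1 / Real.sqrt 2 := by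
  -- an opaque handle on √2
  obtain ⟨c, hc⟩ : ∃ c : ℝ, Real.sqrt 2 = c := ⟨_, rfl⟩
  have hc2 : c ^ 2 = 2 := by rw [← hc]; exact Real.sq_sqrt (by norm_num)
  have hc14 : (1.41 : ℝ) ≤ c := by
    have h := Real.sqrt_le_sqrt (show (1.41:ℝ)^2 ≤ 2 by norm_num)
    rwa [Real.sqrt_sq (by norm_num), hc] at h
  have hc15 : c ≤ 1.415 := by
    have h := Real.sqrt_le_sqrt (show (2:ℝ) ≤ (1.415:ℝ)^2 by norm_num)
    rwa [Real.sqrt_sq (by norm_num), hc] at h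
  have hcpos : (0:ℝ) < c := by linarith
  rw [hc] at hξ
  rw [hc]
  -- opaque handles on the componentwise square roots
  obtain ⟨b, hbdef⟩ : ∃ b : Fin (2*n) → ℝ, ∀ i, Real.sqrt (v i * s i) = b i :=
    ⟨_, fun i => rfl⟩
  obtain ⟨q, hqdef⟩ : ∃ q : Fin (2*n) → ℝ, ∀ i,
      Real.sqrt (s i / v i) * dv i - Real.sqrt (v i / s i) * ds i = q i :=
    ⟨_, fun i => rfl⟩
  obtain ⟨r, hrdef⟩ : ∃ r : Fin (2*n) → ℝ, ∀ i,
      Real.sqrt ((v i + dv i) * (s i + ds i)) = r i :=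
    ⟨_, fun i => rfl⟩
  -- componentwise identities
  have hw : ∀ i, (v i + dv i) * (s i + ds i) = τ^2 - q i ^2 / 4 ∧
      q i ^2 = 4*(τ - b i)^2 - 4*(dv i * ds i) := by
    intro i
    have hvi := hv i; have hsi := hs i
    have hAD : Real.sqrt (s i / v i) * Real.sqrt (v i / s i) = 1 := by
      rw [← Real.sqrt_mul (by positivity), show s i / v i * (v i / s i) = 1 by
        field_simp]
      exact Real.sqrt_one
    have hbA : Real.sqrt (v i * s i) * Real.sqrt (s i / v i) = s i := by
      rw [← Real.sqrt_mul (by positivity),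
        show v i * s i * (s i / v i) = (s i)^2 by field_simp]
      exact Real.sqrt_sq hsi.le
    have hbD : Real.sqrt (v i * s i) * Real.sqrt (v i / s i) = v i := by
      rw [← Real.sqrt_mul (by positivity),
        show v i * s i * (v i / s i) = (v i)^2 by field_simp]
      exact Real.sqrt_sq hvi.le
    have h := key_alg _ _ _ _ _ _ _ _ hAD hbA hbD (hnewton i)
    rw [hqdef i, hbdef i] at h
    exact h
  have hw1 : ∀ i, (v i + dv i) * (s i + ds i) = τ^2 - q i ^2 / 4 :=
    fun i => (hw i).1
  have hw2 : ∀ i, q i ^2 = 4*(τ - b i)^2 - 4*(dv i * ds i) := fun i => (hw i).2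
  -- bound on ∑ (τ - b i)^2 from hξ
  have hbsum : (∑ i, (τ - Real.sqrt (v i * s i)) ^ 2) = ∑ i, (τ - b i)^2 :=
    Finset.sum_congr rfl fun i _ => by rw [hbdef i]
  have hPnn : (0:ℝ) ≤ ∑ i, (τ - b i)^2 :=
    Finset.sum_nonneg fun i _ => sq_nonneg _
  have hξ' : Real.sqrt (∑ i, (τ - b i)^2) ≤ τ / c := by
    have h := hξ
    rw [hξdef, hbsum, div_le_div_iff₀ hτ hcpos] at h
    rw [le_div_iff₀ hcpos]
    linarith
  have hP : ∑ i, (τ - b i)^2 ≤ τ^2 / 2 := by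
    have h1 : Real.sqrt (∑ i, (τ - b i)^2) ^ 2 ≤ (τ/c)^2 :=
      pow_le_pow_left₀ (Real.sqrt_nonneg _) hξ' 2
    rw [Real.sq_sqrt hPnn] at h1
    have h2 : (τ/c)^2 = τ^2/2 := by rw [div_pow, hc2]
    linarith
  -- bound on ∑ q i ^ 2
  have hQ : ∑ i, q i ^2 ≤ 2*τ^2 := by
    have h1 : ∑ i, q i ^2 = 4*(∑ i, (τ - b i)^2) - 4*(∑ i, dv i * ds i) := by
      rw [Finset.mul_sum, Finset.mul_sum, ← Finset.sum_sub_distrib]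
      exact Finset.sum_congr rfl fun i _ => hw2 i
    linarith
  have hQnn : (0:ℝ) ≤ ∑ i, q i ^2 := Finset.sum_nonneg fun i _ => sq_nonneg _
  have hqi : ∀ i, q i ^2 ≤ 2*τ^2 := fun i =>
    le_trans (Finset.single_le_sum (fun j _ => sq_nonneg (q j)) (Finset.mem_univ i)) hQ
  -- facts about r
  have hWnn : ∀ i, 0 ≤ (v i + dv i) * (s i + ds i) := by
    intro i; rw [hw1 i]
    have h1 := hqi i; have h2 := sq_nonneg τ; linarith
  have hr2 : ∀ i, r i ^2 = τ^2 - q i ^2/4 := by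
    intro i
    rw [← hrdef i, Real.sq_sqrt (hWnn i)]
    exact hw1 i
  have hrub : ∀ i, r i ≤ τ := by
    intro i
    have h1 : (v i + dv i) * (s i + ds i) ≤ τ^2 := by
      rw [hw1 i]
      have h2 := sq_nonneg (q i); linarith
    have h3 := Real.sqrt_le_sqrt h1
    rwa [Real.sqrt_sq hτ.le, hrdef i] at h3
  have hrlb : ∀ i, τ / c ≤ r i := by
    intro i
    have h2 : (τ/c)^2 = τ^2/2 := by rw [div_pow, hc2]
    have h1 : (τ/c)^2 ≤ (v i + dv i) * (s i + ds i) := by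
      rw [hw1 i, h2]
      have h3 := hqi i; linarith
    have h3 := Real.sqrt_le_sqrt h1
    rwa [Real.sqrt_sq (by positivity), hrdef i] at h3
  have hrsum : (∑ i, (τp - Real.sqrt ((v i + dv i) * (s i + ds i))) ^ 2)
      = ∑ i, (τp - r i)^2 :=
    Finset.sum_congr rfl fun i _ => by rw [hrdef i]
  have hdivc : τ/c = τ*c/2 := by
    rw [div_eq_div_iff hcpos.ne' (by norm_num : (2:ℝ) ≠ 0)]
    linear_combination (-τ) * hc2
  have hKpos : (0:ℝ) < 4*(τ + τ/c) := by positivity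
  -- key per-coordinate bound
  have hkey : ∀ i, (τ - r i) * (4*(τ + τ/c)) ≤ q i ^2 := by
    intro i
    have h1 : (τ - r i)*(τ + r i) = q i ^2/4 := by
      linear_combination (-1) * hr2 i
    have h2 : 0 ≤ τ - r i := sub_nonneg.2 (hrub i)
    nlinarith [mul_le_mul_of_nonneg_left (add_le_add_left (hrlb i) τ) h2]
  have hterm : ∀ i, (τ - r i)^2 ≤ (q i ^2)^2 / (4*(τ+τ/c))^2 := by
    intro i
    have h2 : 0 ≤ τ - r i := sub_nonneg.2 (hrub i)
    have h3 : τ - r i ≤ q i ^2/(4*(τ+τ/c)) := (le_div_iff₀ hKpos).2 (hkey i)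
    have h4 := pow_le_pow_left₀ h2 h3 2
    rwa [div_pow] at h4
  have hA : ∑ i, (τ - r i)^2 ≤ (2*τ^2)^2 / (4*(τ+τ/c))^2 := by
    calc ∑ i, (τ - r i)^2 ≤ ∑ i, (q i ^2)^2 / (4*(τ+τ/c))^2 :=
          Finset.sum_le_sum fun i _ => hterm i
      _ = (∑ i, (q i ^2)^2) / (4*(τ+τ/c))^2 := by rw [Finset.sum_div]
      _ ≤ (∑ i, q i ^2)^2 / (4*(τ+τ/c))^2 := by
          apply div_le_div_of_nonneg_right ?_ (by positivity)
          exact Finset.sum_sq_le_sq_sum_of_nonneg fun i _ => sq_nonneg _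
      _ ≤ (2*τ^2)^2 / (4*(τ+τ/c))^2 := by
          apply div_le_div_of_nonneg_right ?_ (by positivity)
          exact pow_le_pow_left₀ hQnn hQ 2
  -- eta facts
  have hnpos : (0:ℝ) < 2*(n:ℝ) := by positivity
  have hs2n : Real.sqrt (2*(n:ℝ)) ^2 = 2*(n:ℝ) := Real.sq_sqrt hnpos.le
  have hs2npos : 0 < Real.sqrt (2*(n:ℝ)) := Real.sqrt_pos.2 hnpos
  have hηpos : 0 < η := by rw [hηdef]; positivity
  have hcle : c ≤ Real.sqrt (2*(n:ℝ)) := by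
    rw [← hc]
    apply Real.sqrt_le_sqrt
    have : (1:ℝ) ≤ (n:ℝ) := by exact_mod_cast hn
    linarith
  have hηle : η ≤ 1/(4*c) := by
    rw [hηdef]
    apply one_div_le_one_div_of_le (by positivity)
    linarith
  have hη2 : (2*(n:ℝ)) * η^2 = 1/16 := by
    rw [hηdef, div_pow, mul_pow, hs2n, one_pow]
    rw [mul_one_div, div_eq_div_iff (by positivity) (by norm_num : (16:ℝ) ≠ 0)]
    ring
  have hη' : η ≤ 0.178 := by
    refine le_trans hηle ?_
    rw [div_le_iff₀ (by positivity)]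
    nlinarith [hc14]
  have hτppos : 0 < τp := by rw [hτp]; nlinarith [hηpos, hη']
  -- sum with τp
  have hterm2 : ∀ i, (τp - r i)^2 ≤ (τ - r i)^2 + η^2*τ^2 := by
    intro i
    rw [hτp]
    have h2 : 0 ≤ τ - r i := sub_nonneg.2 (hrub i)
    nlinarith [mul_nonneg (mul_nonneg hηpos.le hτ.le) h2]
  have hS : ∑ i, (τp - r i)^2 ≤ (2*τ^2)^2/(4*(τ+τ/c))^2 + τ^2/16 := by
    have h1 : ∑ i, (τp - r i)^2 ≤ ∑ i, ((τ - r i)^2 + η^2*τ^2) :=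
      Finset.sum_le_sum fun i _ => hterm2 i
    rw [Finset.sum_add_distrib, Finset.sum_const, Finset.card_univ, Fintype.card_fin,
      nsmul_eq_mul] at h1
    have h2 : ((2*n : ℕ) : ℝ) * (η^2*τ^2) = τ^2/16 := by
      push_cast
      nlinarith [hη2]
    linarith
  -- numeric bound
  have hb1 : (2*τ^2)^2/(4*(τ+τ/c))^2 ≤ 0.09*τ^2 := by
    rw [hdivc, div_le_iff₀ (by positivity)]
    nlinarith [hc14, sq_nonneg τ, sq_nonneg (τ*c), mul_pos hτ hτ]
  have hτpge : 0.82*τ ≤ τp := by rw [hτp]; nlinarith [hη']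
  have hfinal : ∑ i, (τp - r i)^2 ≤ (τp/c)^2 := by
    have h2 : (τp/c)^2 = τp^2/2 := by rw [div_pow, hc2]
    rw [h2]
    nlinarith [hS, hb1, hτpge, hτ]
  -- conclude
  rw [hξpdef, hrsum]
  have h3 : Real.sqrt (∑ i, (τp - r i)^2) ≤ τp/c := by
    have h5 := Real.sqrt_le_sqrt hfinal
    rwa [Real.sqrt_sq (by positivity)] at h5
  rw [div_le_div_iff₀ hτppos hcpos]
  calc Real.sqrt (∑ i, (τp - r i)^2) * c ≤ (τp/c) * c :=
        mul_le_mul_of_nonneg_right h3 hcpos.le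
    _ = 1 * τp := by field_simp
end

section
/- If ξ ≤ 1/√2 and v₊ = v + Δv, s₊ = s + Δs, then the duality gap after the full Newton step satisfies the two-sided bound (1 − 1/(4n)) · 2n τ² ≤ v₊ᵀ s₊ ≤ 2n τ². -/
/-- Two-sided duality-gap bound (Theorem 2, key estimate): if `ξ ≤ 1/√2`, then
after the full Newton step the duality gap satisfies
`(1 − 1/(4n)) · 2n τ² ≤ v₊ᵀ s₊ ≤ 2n τ²`. -/
theorem duality_gap_two_sided_bound
    (n : ℕ) (hn : 0 < n)
    (v s dv ds : Fin (2 * n) → ℝ) (τ : ℝ) (hτ : 0 < τ)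
    (hv : ∀ i, 0 < v i) (hs : ∀ i, 0 < s i)
    (hdot : 0 ≤ ∑ i, dv i * ds i)
    (hnewton : ∀ i, Real.sqrt (s i / v i) * dv i + Real.sqrt (v i / s i) * ds i
        = 2 * (τ - Real.sqrt (v i * s i)))
    (ξ : ℝ)
    (hξdef : ξ = Real.sqrt (∑ i, (τ - Real.sqrt (v i * s i)) ^ 2) / τ)
    (hξ : ξ ≤ 1 / Real.sqrt 2) :
    (1 - 1 / (4 * (n : ℝ))) * (2 * (n : ℝ) * τ ^ 2)
        ≤ ∑ i, (v i + dv i) * (s i + ds i)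
      ∧ ∑ i, (v i + dv i) * (s i + ds i) ≤ 2 * (n : ℝ) * τ ^ 2 := by
  -- basic per-index facts
  have hfacts : ∀ i, (v i + dv i) * (s i + ds i)
      = τ ^ 2 - (τ - Real.sqrt (v i * s i)) ^ 2 + dv i * ds i
      ∧ dv i * ds i ≤ (τ - Real.sqrt (v i * s i)) ^ 2 := by
    intro i
    have hvi := hv i
    have hsi := hs i
    set a := Real.sqrt (s i / v i) with ha
    set c := Real.sqrt (v i / s i) with hc
    set b := Real.sqrt (v i * s i) with hb
    have hb2 : b ^ 2 = v i * s i := Real.sq_sqrt (by positivity)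
    have h1 : b * a = s i := by
      rw [hb, ha, ← Real.sqrt_mul (by positivity)]
      rw [show v i * s i * (s i / v i) = s i ^ 2 by field_simp]
      exact Real.sqrt_sq hsi.le
    have h2 : b * c = v i := by
      rw [hb, hc, ← Real.sqrt_mul (by positivity)]
      rw [show v i * s i * (v i / s i) = v i ^ 2 by field_simp]
      exact Real.sqrt_sq hvi.le
    have h3 : a * c = 1 := by
      rw [ha, hc, ← Real.sqrt_mul (by positivity)]
      rw [show s i / v i * (v i / s i) = 1 by field_simp]
      exact Real.sqrt_one
    have hN := hnewton i
    rw [← ha, ← hc, ← hb] at hN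
    have hsq : (a * dv i + c * ds i) ^ 2 = 4 * (τ - b) ^ 2 := by rw [hN]; ring
    have hprod : dv i * ds i
        = ((a * dv i + c * ds i) ^ 2 - (a * dv i - c * ds i) ^ 2) / 4 := by
      linear_combination (-(dv i * ds i)) * h3
    constructor
    · linear_combination b * hN - ds i * h2 - dv i * h1 - hb2
    · rw [hprod, hsq]
      nlinarith [sq_nonneg (a * dv i - c * ds i)]
  -- sum identity
  have hsum : ∑ i, (v i + dv i) * (s i + ds i)
      = 2 * (n : ℝ) * τ ^ 2 - (∑ i, (τ - Real.sqrt (v i * s i)) ^ 2)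
        + ∑ i, dv i * ds i := by
    have : ∑ i, (v i + dv i) * (s i + ds i)
        = ∑ i, (τ ^ 2 - (τ - Real.sqrt (v i * s i)) ^ 2 + dv i * ds i) :=
      Finset.sum_congr rfl (fun i _ => (hfacts i).1)
    rw [this, Finset.sum_add_distrib, Finset.sum_sub_distrib, Finset.sum_const,
      Finset.card_univ, Fintype.card_fin, nsmul_eq_mul]
    push_cast
    ring
  have hS_nonneg : (0:ℝ) ≤ ∑ i, (τ - Real.sqrt (v i * s i)) ^ 2 :=
    Finset.sum_nonneg fun i _ => sq_nonneg _
  constructor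
  · -- lower bound
    have hξ0 : 0 ≤ ξ := by
      rw [hξdef]; positivity
    have hSval : ∑ i, (τ - Real.sqrt (v i * s i)) ^ 2 = ξ ^ 2 * τ ^ 2 := by
      have : Real.sqrt (∑ i, (τ - Real.sqrt (v i * s i)) ^ 2) = ξ * τ := by
        rw [hξdef]; field_simp
      calc ∑ i, (τ - Real.sqrt (v i * s i)) ^ 2
          = (Real.sqrt (∑ i, (τ - Real.sqrt (v i * s i)) ^ 2)) ^ 2 :=
            (Real.sq_sqrt hS_nonneg).symm
        _ = (ξ * τ) ^ 2 := by rw [this]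
        _ = ξ ^ 2 * τ ^ 2 := by ring
    have hξ2 : ξ ^ 2 ≤ 1 / 2 := by
      have h2 : (0:ℝ) < Real.sqrt 2 := Real.sqrt_pos.2 (by norm_num)
      have := mul_le_mul hξ hξ hξ0 (by positivity)
      have hss : (1 / Real.sqrt 2) * (1 / Real.sqrt 2) = 1 / 2 := by
        rw [div_mul_div_comm, one_mul, Real.mul_self_sqrt (by norm_num)]
      nlinarith
    have hSle : ∑ i, (τ - Real.sqrt (v i * s i)) ^ 2 ≤ τ ^ 2 / 2 := by
      rw [hSval]; nlinarith [sq_nonneg τ]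
    have hnR : (0:ℝ) < (n:ℝ) := Nat.cast_pos.2 hn
    have heq : (1 - 1 / (4 * (n : ℝ))) * (2 * (n : ℝ) * τ ^ 2)
        = 2 * (n : ℝ) * τ ^ 2 - τ ^ 2 / 2 := by
      field_simp
      ring
    rw [heq, hsum]
    linarith
  · -- upper bound
    rw [hsum]
    have hle : ∑ i, dv i * ds i ≤ ∑ i, (τ - Real.sqrt (v i * s i)) ^ 2 :=
      Finset.sum_le_sum fun i _ => (hfacts i).2
    linarith
end

section
/- Let n be a positive integer, λ = 1/√(n+1), and h̃ ∈ ℝⁿ with ‖h̃‖_∞ ≤ 1. Then the initial proximity measure satisfies ξ⁰ = √( Σ_{i=1}^{n} [ (1 − √(1 − λ h̃_i))² + (1 − √(1 + λ h̃_i))² ] ) ≤ 1/√2. -/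
set_option maxHeartbeats 1000000 in
lemma key_term (x : ℝ) (hx : x^2 ≤ 1/2) :
    (1 - Real.sqrt (1-x))^2 + (1 - Real.sqrt (1+x))^2 ≤ x^2 / (2*(1-x^2)) := by
  have h1x : (0:ℝ) ≤ 1 - x := by nlinarith
  have h2x : (0:ℝ) ≤ 1 + x := by nlinarith
  set a := Real.sqrt (1-x) with ha
  set b := Real.sqrt (1+x) with hb
  set s := Real.sqrt (1-x^2) with hs
  have ha2 : a^2 = 1 - x := Real.sq_sqrt h1x
  have hb2 : b^2 = 1 + x := Real.sq_sqrt h2x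
  have hs2 : s^2 = 1 - x^2 := Real.sq_sqrt (by nlinarith)
  have hs0 : 0 ≤ s := Real.sqrt_nonneg _
  have ha0 : 0 ≤ a := Real.sqrt_nonneg _
  have hb0 : 0 ≤ b := Real.sqrt_nonneg _
  have hab : a * b = s := by
    rw [ha, hb, hs, ← Real.sqrt_mul h1x]
    ring_nf
  have hs2half : (1:ℝ)/2 ≤ s^2 := by nlinarith
  have hspos : 0 < s := by nlinarith
  have hsle1 : s ≤ 1 := by nlinarith
  set t := a + b with htdef
  have ht2 : t^2 = 2 + 2*s := by
    have : t^2 = a^2 + 2*(a*b) + b^2 := by ring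
    rw [this, ha2, hb2, hab]; ring
  have ht0 : 0 ≤ t := by positivity
  have hcubic : 0 ≤ 32*s^3 + 15*s^2 - 2*s - 1 := by nlinarith
  have hP : 0 ≤ 32*s^5 - 49*s^4 + 18*s^2 - 1 := by
    nlinarith [mul_nonneg (sq_nonneg (s-1)) hcubic]
  have hB : (0:ℝ) ≤ 9*s^2 - 1 := by nlinarith
  have hA0 : (0:ℝ) ≤ 4*s^2*t := by positivity
  have hsq : (9*s^2 - 1)^2 ≤ (4*s^2*t)^2 := by
    have h1 : (4*s^2*t)^2 = 16*s^4*(2+2*s) := by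
      have : (4*s^2*t)^2 = 16*s^4*t^2 := by ring
      rw [this, ht2]
    rw [h1]; nlinarith [hP]
  have ht : 9*s^2 - 1 ≤ 4*s^2*t :=
    (pow_le_pow_iff_left₀ hB hA0 (by norm_num)).mp hsq
  have hdenpos : 0 < 2*(1-x^2) := by nlinarith
  rw [le_div_iff₀ hdenpos]
  have hexp : ((1-a)^2 + (1-b)^2) = 4 - 2*t := by
    have : (1-a)^2 + (1-b)^2 = 2 - 2*(a+b) + (a^2+b^2) := by ring
    rw [this, ha2, hb2]; ring
  rw [hexp]
  nlinarith [ht, hs2]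

/-- Lemma 4 (initial proximity measure): for `λ = 1/√(n+1)` and `‖h̃‖_∞ ≤ 1`,
the initial proximity measure
`ξ⁰ = √( Σᵢ (1 − √(1 − λ h̃ᵢ))² + (1 − √(1 + λ h̃ᵢ))² )` satisfies
`ξ⁰ ≤ 1/√2`. -/
theorem initial_proximity_measure_bound
    (n : ℕ) (hn : 0 < n)
    (lam : ℝ) (hlam : lam = 1 / Real.sqrt ((n : ℝ) + 1))
    (h : Fin n → ℝ) (hh : ∀ i, |h i| ≤ 1) :
    Real.sqrt (∑ i, ((1 - Real.sqrt (1 - lam * h i)) ^ 2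
        + (1 - Real.sqrt (1 + lam * h i)) ^ 2)) ≤ 1 / Real.sqrt 2 := by
  have hn1 : (1:ℝ) ≤ (n:ℝ) := by exact_mod_cast hn
  have hnpos : (0:ℝ) < (n:ℝ) := by linarith
  have hlam2 : lam^2 = 1/((n:ℝ)+1) := by
    rw [hlam, div_pow, one_pow, Real.sq_sqrt (by linarith)]
  have hterm : ∀ i, (1 - Real.sqrt (1 - lam * h i)) ^ 2
      + (1 - Real.sqrt (1 + lam * h i)) ^ 2 ≤ 1/(2*(n:ℝ)) := by
    intro i
    set x := lam * h i with hxdef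
    have hx2lam : x^2 ≤ 1/((n:ℝ)+1) := by
      have h1 : x^2 = lam^2 * (h i)^2 := by rw [hxdef]; ring
      have h2 : (h i)^2 ≤ 1 := by
        have := hh i
        nlinarith [abs_nonneg (h i), sq_abs (h i)]
      rw [h1, hlam2]
      have : 0 ≤ 1/((n:ℝ)+1) := by positivity
      nlinarith
    have hxhalf : x^2 ≤ 1/2 := by
      have : 1/((n:ℝ)+1) ≤ 1/2 := by
        rw [div_le_div_iff₀ (by linarith) (by norm_num)]; linarith
      linarith
    refine le_trans (key_term x hxhalf) ?_
    have hx' : x^2*((n:ℝ)+1) ≤ 1 := by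
      rw [← le_div_iff₀ (by linarith : (0:ℝ) < (n:ℝ)+1)]
      simpa [one_div] using hx2lam
    rw [div_le_div_iff₀ (by nlinarith) (by positivity)]
    nlinarith [hx']
  have hsum : (∑ i, ((1 - Real.sqrt (1 - lam * h i)) ^ 2
      + (1 - Real.sqrt (1 + lam * h i)) ^ 2)) ≤ 1/2 := by
    calc (∑ i, ((1 - Real.sqrt (1 - lam * h i)) ^ 2
        + (1 - Real.sqrt (1 + lam * h i)) ^ 2))
        ≤ ∑ _i : Fin n, 1/(2*(n:ℝ)) := Finset.sum_le_sum fun i _ => hterm i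
      _ = (n:ℝ) * (1/(2*(n:ℝ))) := by
          rw [Finset.sum_const, Finset.card_univ, Fintype.card_fin, nsmul_eq_mul]
      _ = 1/2 := by field_simp
  calc Real.sqrt (∑ i, ((1 - Real.sqrt (1 - lam * h i)) ^ 2
      + (1 - Real.sqrt (1 + lam * h i)) ^ 2))
      ≤ Real.sqrt (1/2) := Real.sqrt_le_sqrt hsum
    _ = 1 / Real.sqrt 2 := by
        rw [one_div, Real.sqrt_inv, one_div]
end
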